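/- Let a > 0 and let φ : [0,a] → ℝ be a strictly increasing, concave, continuous function with φ(0) = 0 and φ(a) = 1. Suppose f, g ∈ Λ(φ)[0,a], ‖f‖_{Λ(φ)} = 1, the set {t ∈ [0,a] : f(t) = 0} has Lebesgue measure zero, and ‖f + g‖_{Λ(φ)} ≤ 1 and ‖f − g‖_{Λ(φ)} ≤ 1. Then g = h·f for some measurable real-valued function h on [0,a] with |h(t)| ≤ 1 for a.e. t ∈ [0,a]. -/

import Mathlib

open MeasureTheory Set Filter Topology
open scoped ENNReal NNReal Classical

noncomputable section

/-- The distribution function `m {s ∈ [0,a] : τ < ‖f s‖}` of `f` on `[0,a]`. -/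
def distrib {E : Type*} [NormedAddCommGroup E] (a : ℝ) (f : ℝ → E) (τ : ℝ) : ℝ≥0∞ :=
  volume {s ∈ Set.Icc (0:ℝ) a | τ < ‖f s‖}

/-- The decreasing rearrangement `f*` of `f` on `[0,a]`:
`f*(t) = inf {τ ≥ 0 : m {s ∈ [0,a] : ‖f s‖ > τ} ≤ t}`. -/
def rearr {E : Type*} [NormedAddCommGroup E] (a : ℝ) (f : ℝ → E) (t : ℝ) : ℝ :=
  sInf {τ : ℝ | 0 ≤ τ ∧ distrib a f τ ≤ ENNReal.ofReal t}

/-- The clamp of `t : ℝ` to the interval `[0,a]`. -/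
def clampIcc (a t : ℝ) : ℝ := min (max t 0) a

lemma clampIcc_mem (a t : ℝ) (ha : 0 ≤ a) : clampIcc a t ∈ Set.Icc (0:ℝ) a :=
  ⟨le_min (le_max_right t 0) ha, min_le_right _ _⟩

lemma clampIcc_mono (a : ℝ) : Monotone (clampIcc a) := fun _ _ hst =>
  min_le_min (max_le_max hst le_rfl) le_rfl

lemma clampIcc_continuous (a : ℝ) : Continuous (clampIcc a) :=
  (continuous_id.max continuous_const).min continuous_const

/-- The Stieltjes integrator associated with an increasing continuous function `φ` on `[0,a]`
(extended to all of `ℝ` as a constant outside `[0,a]`).  Its Lebesgue–Stieltjes measure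
realizes the integrals `∫₀^a ⋯ dφ(t)`. -/
def stieltjesOfOn (φ : ℝ → ℝ) (a : ℝ) : StieltjesFunction ℝ :=
  if h : 0 ≤ a ∧ MonotoneOn φ (Set.Icc 0 a) ∧ ContinuousOn φ (Set.Icc 0 a) then
    { toFun := fun t => φ (clampIcc a t)
      mono' := fun s t hst =>
        h.2.1 (clampIcc_mem a s h.1) (clampIcc_mem a t h.1) (clampIcc_mono a hst)
      right_continuous' := fun t =>
        ((h.2.2.comp_continuous (clampIcc_continuous a)
          (fun x => clampIcc_mem a x h.1)).continuousAt).continuousWithinAt }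
  else StieltjesFunction.id

/-- The Lorentz space functional `‖f‖_{Λ(φ)} = ∫₀^a f*(t) dφ(t)` (with values in `ℝ≥0∞`). -/
def eLorentzNorm {E : Type*} [NormedAddCommGroup E] (φ : ℝ → ℝ) (a : ℝ) (f : ℝ → E) : ℝ≥0∞ :=
  ∫⁻ t in Set.Ioc (0:ℝ) a, ENNReal.ofReal (rearr a f t) ∂(stieltjesOfOn φ a).measure

/-- Membership in the Lorentz space `Λ(φ)[0,a]`. -/
def MemLorentz {E : Type*} [NormedAddCommGroup E] [MeasurableSpace E]
    (φ : ℝ → ℝ) (a : ℝ) (f : ℝ → E) : Prop :=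
  Measurable f ∧ eLorentzNorm φ a f < ⊤

/-- The Hardy–Lorentz space functional
`‖f‖_{H(Λ(φ))} = sup_{0 ≤ r < 1} ‖t ↦ f (r e^{it})‖_{Λ(φ)}` for functions on the unit disk. -/
def eHLNorm (φ : ℝ → ℝ) (f : ℂ → ℂ) : ℝ≥0∞ :=
  ⨆ r ∈ Set.Ico (0:ℝ) 1,
    eLorentzNorm φ (2 * Real.pi)
      (fun t : ℝ => f (Complex.ofReal r * Complex.exp (Complex.I * Complex.ofReal t)))

/-- The classical `H¹` functional `‖f‖_{H¹} = sup_{0 ≤ r < 1} (1/(2π)) ∫₀^{2π} |f(r e^{it})| dt`. -/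
def eH1Norm (f : ℂ → ℂ) : ℝ≥0∞ :=
  ⨆ r ∈ Set.Ico (0:ℝ) 1,
    (ENNReal.ofReal (2 * Real.pi))⁻¹ *
      ∫⁻ t in Set.Ioc (0:ℝ) (2 * Real.pi),
        ENNReal.ofReal ‖f (Complex.ofReal r * Complex.exp (Complex.I * Complex.ofReal t))‖

/-- `fb` is the boundary (radial limit) function of `f`: for a.e. `t ∈ [0,2π]`,
`f(r e^{it}) → fb t` as `r → 1⁻`.  (For `f ∈ H¹` such a function exists and coincides a.e.
with the nontangential limit `f̃`.) -/
def HasRadialLimits (f : ℂ → ℂ) (fb : ℝ → ℂ) : Prop :=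
  ∀ᵐ t ∂(volume.restrict (Set.Icc (0:ℝ) (2 * Real.pi))),
    Filter.Tendsto (fun r : ℝ => f (Complex.ofReal r * Complex.exp (Complex.I * Complex.ofReal t)))
      (nhdsWithin 1 (Set.Iio 1)) (nhds (fb t))

/-- `f` (with boundary function `fb`) is an outer function:
`f` is non-null and `ln |f 0| = (1/(2π)) ∫₀^{2π} ln |fb s| ds`. -/
def IsOuter (f : ℂ → ℂ) (fb : ℝ → ℂ) : Prop :=
  (∃ z ∈ Metric.ball (0:ℂ) 1, f z ≠ 0) ∧
    Real.log ‖f 0‖ =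
      (1 / (2 * Real.pi)) * ∫ s in Set.Ioc (0:ℝ) (2 * Real.pi), Real.log ‖fb s‖

/-- The set `E₊ = {t ∈ [0,a] : h t > 0}`. -/
def posSet (a : ℝ) (h : ℝ → ℝ) : Set ℝ := {t ∈ Set.Icc (0:ℝ) a | 0 < h t}

/-- The set `E₋ = {t ∈ [0,a] : h t < 0}`. -/
def negSet (a : ℝ) (h : ℝ → ℝ) : Set ℝ := {t ∈ Set.Icc (0:ℝ) a | h t < 0}

/-!
Let `ρ = normRank a f` rank the points of `[0,a]` by decreasing `|f|`, ties broken by position;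
`ρ` maps `m|[0,a]` to itself. Put `W = φ' ∘ ρ`, with `φ'` the right derivative of `φ`, and
`P(u) = ∫_{[0,a]} |u| W`. Since `φ'` decreases, `∫_B W ≤ φ(m B)` for every `B ⊆ [0,a]`, and the
layer-cake formula `‖u‖_{Λ(φ)} = ∫_{τ > 0} φ(m{|u| > τ}) dτ` gives `P(u) ≤ ‖u‖_{Λ(φ)}`; since
`{ρ < m{|f| > τ}} ⊆ {|f| > τ}`, equality holds for `u = f`. Thus
`P(f + g) + P(f - g) ≤ 2 = 2 P(f)`, i.e. `∫ (|f + g| + |f - g| - 2|f|) W ≤ 0`. Strict monotonicity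
of `φ` makes `W > 0` a.e., so `|f + g| + |f - g| = 2|f|` a.e., and in the strictly convex plane
this means `g = h f` with `h` real and `|h| ≤ 1` wherever `f ≠ 0`.
-/

lemma volume_sep_Icc_ne_top (a : ℝ) (p : ℝ → Prop) : volume {t ∈ Icc (0:ℝ) a | p t} ≠ ∞ :=
  ((measure_mono (sep_subset _ _)).trans_lt measure_Icc_lt_top).ne

section Rearrangement

variable {E : Type*} [NormedAddCommGroup E] {a t τ : ℝ} {u : ℝ → E}

lemma measurableSet_superlevel (hu : Measurable fun s => ‖u s‖) (a τ : ℝ) :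
    MeasurableSet {s ∈ Icc (0:ℝ) a | τ < ‖u s‖} :=
  measurableSet_Icc.inter (measurableSet_lt measurable_const hu)

lemma measurableSet_level (hu : Measurable fun s => ‖u s‖) (a τ : ℝ) :
    MeasurableSet {s ∈ Icc (0:ℝ) a | ‖u s‖ = τ} :=
  measurableSet_Icc.inter (measurableSet_eq_fun hu measurable_const)

lemma distrib_antitone (a : ℝ) (u : ℝ → E) : Antitone (distrib a u) := fun _ _ h =>
  measure_mono fun _ hs => ⟨hs.1, h.trans_lt hs.2⟩

lemma distrib_le (a : ℝ) (u : ℝ → E) (τ : ℝ) : distrib a u τ ≤ ENNReal.ofReal a := by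
  refine (measure_mono (sep_subset _ _)).trans_eq ?_
  rw [Real.volume_Icc, sub_zero]

lemma distrib_ne_top : distrib a u τ ≠ ∞ :=
  volume_sep_Icc_ne_top a _

lemma toReal_distrib_le (ha : 0 ≤ a) : (distrib a u τ).toReal ≤ a :=
  ENNReal.toReal_le_of_le_ofReal ha (distrib_le a u τ)

lemma distrib_of_neg (hτ : τ < 0) : distrib a u τ = ENNReal.ofReal a := by
  rw [distrib, sep_eq_self_iff_mem_true.2 fun s _ => hτ.trans_le (norm_nonneg _), Real.volume_Icc,
    sub_zero]

lemma tendsto_distrib_add_one_div (a : ℝ) (u : ℝ → E) (τ : ℝ) :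
    Tendsto (fun n : ℕ => distrib a u (τ + 1 / (n + 1))) atTop (𝓝 (distrib a u τ)) := by
  have hmono : Monotone fun n : ℕ => {s ∈ Icc (0:ℝ) a | τ + 1 / (n + 1) < ‖u s‖} :=
    fun n m hnm s hs => ⟨hs.1, lt_of_le_of_lt (by gcongr) hs.2⟩
  have hunion : (⋃ n : ℕ, {s ∈ Icc (0:ℝ) a | τ + 1 / (n + 1) < ‖u s‖})
      = {s ∈ Icc (0:ℝ) a | τ < ‖u s‖} := by
    ext s
    simp only [mem_iUnion, mem_sep_iff]
    refine ⟨fun ⟨n, hs, hτ⟩ => ⟨hs, lt_of_le_of_lt (le_add_of_nonneg_right (by positivity)) hτ⟩,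
      fun ⟨hs, hτ⟩ => ?_⟩
    obtain ⟨n, hn⟩ := exists_nat_one_div_lt (sub_pos.2 hτ)
    exact ⟨n, hs, by linarith⟩
  have hlim := tendsto_measure_iUnion_atTop (μ := volume) hmono
  rwa [hunion] at hlim

lemma tendsto_distrib_sub_one_div (hu : Measurable fun s => ‖u s‖) (a τ : ℝ) :
    Tendsto (fun n : ℕ => distrib a u (τ - 1 / (n + 1))) atTop
      (𝓝 (volume {s ∈ Icc (0:ℝ) a | τ ≤ ‖u s‖})) := by
  have hanti : Antitone fun n : ℕ => {s ∈ Icc (0:ℝ) a | τ - 1 / (n + 1) < ‖u s‖} :=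
    fun n m hnm s hs => ⟨hs.1, lt_of_le_of_lt (by gcongr) hs.2⟩
  have hinter : (⋂ n : ℕ, {s ∈ Icc (0:ℝ) a | τ - 1 / (n + 1) < ‖u s‖})
      = {s ∈ Icc (0:ℝ) a | τ ≤ ‖u s‖} := by
    ext s
    simp only [mem_iInter, mem_sep_iff]
    refine ⟨fun h => ⟨(h 0).1, le_of_not_gt fun hτ => ?_⟩,
      fun ⟨hs, hτ⟩ n => ⟨hs, lt_of_lt_of_le (sub_lt_self τ (by positivity)) hτ⟩⟩
    obtain ⟨n, hn⟩ := exists_nat_one_div_lt (sub_pos.2 hτ)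
    linarith [(h n).2]
  have hlim := tendsto_measure_iInter_atTop (μ := volume)
    (fun n => (measurableSet_superlevel hu a _).nullMeasurableSet) hanti ⟨0, distrib_ne_top⟩
  rwa [hinter] at hlim

lemma distrib_add_volume_level (hu : Measurable fun s => ‖u s‖) (a τ : ℝ) :
    distrib a u τ + volume {s ∈ Icc (0:ℝ) a | ‖u s‖ = τ}
      = volume {s ∈ Icc (0:ℝ) a | τ ≤ ‖u s‖} := by
  rw [distrib, ← measure_union (disjoint_left.2 fun t h1 h2 => h1.2.ne' h2.2)
    (measurableSet_level hu a τ)]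
  congr 1
  ext t
  simp only [mem_union, mem_sep_iff, le_iff_lt_or_eq, eq_comm (a := τ)]
  tauto

lemma exists_distrib_le (hu : Measurable fun s => ‖u s‖) (ht : 0 < t) :
    ∃ τ, 0 ≤ τ ∧ distrib a u τ ≤ ENNReal.ofReal t := by
  have hanti : Antitone fun τ : ℝ => {s ∈ Icc (0:ℝ) a | τ < ‖u s‖} :=
    fun τ τ' h s hs => ⟨hs.1, h.trans_lt hs.2⟩
  have hempty : (⋂ τ : ℝ, {s ∈ Icc (0:ℝ) a | τ < ‖u s‖}) = ∅ :=
    eq_empty_of_forall_notMem fun s hs => (lt_irrefl _) (mem_iInter.1 hs ‖u s‖).2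
  have hlim := tendsto_measure_iInter_atTop (μ := volume)
    (fun τ => (measurableSet_superlevel hu a τ).nullMeasurableSet) hanti ⟨0, distrib_ne_top⟩
  rw [hempty, measure_empty] at hlim
  obtain ⟨τ, hτ, hτ0⟩ := ((hlim.eventually (gt_mem_nhds (ENNReal.ofReal_pos.2 ht))).and
    (eventually_ge_atTop 0)).exists
  exact ⟨τ, hτ0, hτ.le⟩

lemma rearr_nonneg (a : ℝ) (u : ℝ → E) (t : ℝ) : 0 ≤ rearr a u t :=
  Real.sInf_nonneg fun _ hτ => hτ.1

lemma rearr_le_iff (hu : Measurable fun s => ‖u s‖) (ht : 0 < t) (hτ : 0 ≤ τ) :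
    rearr a u t ≤ τ ↔ distrib a u τ ≤ ENNReal.ofReal t := by
  refine ⟨fun h => le_of_tendsto' (tendsto_distrib_add_one_div a u τ) fun n => ?_,
    fun h => csInf_le ⟨0, fun _ hσ => hσ.1⟩ ⟨hτ, h⟩⟩
  obtain ⟨σ, hσ, hσ_lt⟩ := (csInf_lt_iff ⟨0, fun _ hσ => hσ.1⟩ (exists_distrib_le hu ht)).1
    (h.trans_lt (lt_add_of_pos_right τ (Nat.one_div_pos_of_nat (n := n))))
  exact (distrib_antitone a u hσ_lt.le).trans hσ.2

lemma lt_rearr_iff (hu : Measurable fun s => ‖u s‖) (ht : 0 < t) (hτ : 0 ≤ τ) :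
    τ < rearr a u t ↔ ENNReal.ofReal t < distrib a u τ := by
  simpa only [not_le] using (rearr_le_iff hu ht hτ).not

lemma rearr_antitoneOn (hu : Measurable fun s => ‖u s‖) : AntitoneOn (rearr a u) (Ioi 0) :=
  fun _ ht _ _ htt' => csInf_le_csInf ⟨0, fun _ hσ => hσ.1⟩ (exists_distrib_le hu ht)
    fun _ hσ => ⟨hσ.1, hσ.2.trans (ENNReal.ofReal_le_ofReal htt')⟩

lemma ofReal_le_volume_rearr_le (hu : Measurable fun s => ‖u s‖) (ht : t ∈ Ioc 0 a) :
    ENNReal.ofReal t ≤ volume {s ∈ Icc (0:ℝ) a | rearr a u t ≤ ‖u s‖} := by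
  refine ge_of_tendsto' (tendsto_distrib_sub_one_div hu a _) fun n => ?_
  set σ := rearr a u t - 1 / (n + 1)
  rcases lt_or_ge σ 0 with hσ | hσ
  · rw [distrib_of_neg hσ]
    exact ENNReal.ofReal_le_ofReal ht.2
  · exact ((lt_rearr_iff hu ht.1 hσ).1 (sub_lt_self _ (by positivity))).le

end Rearrangement

section LayerCake

lemma lintegral_ofReal_mul_eq_lintegral_setLIntegral_lt {α : Type*} [MeasurableSpace α]
    (μ : Measure α) {f : α → ℝ} (hf : 0 ≤ f) (hfm : Measurable f) {W : α → ℝ≥0∞}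
    (hW : Measurable W) :
    ∫⁻ x, ENNReal.ofReal (f x) * W x ∂μ = ∫⁻ τ in Ioi 0, ∫⁻ x in {x | τ < f x}, W x ∂μ := by
  calc ∫⁻ x, ENNReal.ofReal (f x) * W x ∂μ = ∫⁻ x, ENNReal.ofReal (f x) ∂μ.withDensity W := by
        rw [lintegral_withDensity_eq_lintegral_mul _ hW hfm.ennreal_ofReal]
        simp only [Pi.mul_apply, mul_comm]
    _ = ∫⁻ τ in Ioi 0, μ.withDensity W {x | τ < f x} :=
        lintegral_eq_lintegral_meas_lt _ (ae_of_all _ hf) hfm.aemeasurable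
    _ = ∫⁻ τ in Ioi 0, ∫⁻ x in {x | τ < f x}, W x ∂μ := by
        simp only [withDensity_apply _ (measurableSet_lt measurable_const hfm)]

variable {E : Type*} [NormedAddCommGroup E] {φ : ℝ → ℝ} {a c : ℝ} {u : ℝ → E}

lemma clampIcc_of_mem {t : ℝ} (ht : t ∈ Icc 0 a) : clampIcc a t = t := by
  simp only [clampIcc, max_eq_left ht.1, min_eq_left ht.2]

lemma stieltjesOfOn_measure_Ioo (ha : 0 ≤ a) (hmono : MonotoneOn φ (Icc 0 a))
    (hcont : ContinuousOn φ (Icc 0 a)) (hc : c ∈ Icc 0 a) :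
    (stieltjesOfOn φ a).measure (Ioo 0 c) = ENNReal.ofReal (φ c - φ 0) := by
  have hF : ⇑(stieltjesOfOn φ a) = fun t => φ (clampIcc a t) := by
    rw [stieltjesOfOn, dif_pos ⟨ha, hmono, hcont⟩]
  have hFcont : Continuous (stieltjesOfOn φ a) :=
    hF ▸ hcont.comp_continuous (clampIcc_continuous a) fun t => clampIcc_mem a t ha
  rw [StieltjesFunction.measure_Ioo,
    leftLim_eq_of_tendsto ((hFcont.tendsto c).mono_left nhdsWithin_le_nhds), hF]
  simp only [clampIcc_of_mem hc, clampIcc_of_mem ⟨le_rfl, ha⟩]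

lemma eLorentzNorm_eq_lintegral_distrib (ha : 0 ≤ a) (hmono : MonotoneOn φ (Icc 0 a))
    (hcont : ContinuousOn φ (Icc 0 a)) (hu : Measurable fun s => ‖u s‖) :
    eLorentzNorm φ a u = ∫⁻ τ in Ioi 0, ENNReal.ofReal (φ (distrib a u τ).toReal - φ 0) := by
  rw [eLorentzNorm, lintegral_eq_lintegral_meas_lt _ (ae_of_all _ (rearr_nonneg a u))
    (aemeasurable_restrict_of_antitoneOn measurableSet_Ioc
      ((rearr_antitoneOn hu).mono Ioc_subset_Ioi_self))]
  refine setLIntegral_congr_fun measurableSet_Ioi fun τ hτ => ?_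
  have hset : {t | τ < rearr a u t} ∩ Ioc 0 a = Ioo 0 (distrib a u τ).toReal := by
    ext t
    simp only [mem_inter_iff, mem_ofPred_eq, mem_Ioc, mem_Ioo]
    constructor
    · rintro ⟨hτt, ht, -⟩
      exact ⟨ht, (ENNReal.ofReal_lt_iff_lt_toReal ht.le distrib_ne_top).1
        ((lt_rearr_iff hu ht (le_of_lt hτ)).1 hτt)⟩
    · rintro ⟨ht, htd⟩
      exact ⟨(lt_rearr_iff hu ht (le_of_lt hτ)).2
        ((ENNReal.ofReal_lt_iff_lt_toReal ht.le distrib_ne_top).2 htd),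
        ht, htd.le.trans (toReal_distrib_le ha)⟩
  rw [Measure.restrict_apply' measurableSet_Ioc, hset,
    stieltjesOfOn_measure_Ioo ha hmono hcont ⟨ENNReal.toReal_nonneg, toReal_distrib_le ha⟩]

lemma lintegral_norm_mul_le_eLorentzNorm (ha : 0 ≤ a) (hmono : MonotoneOn φ (Icc 0 a))
    (hcont : ContinuousOn φ (Icc 0 a)) {W : ℝ → ℝ≥0∞} (hW : Measurable W)
    (hadm : ∀ B, MeasurableSet B → B ⊆ Icc 0 a →
      ∫⁻ s in B, W s ≤ ENNReal.ofReal (φ (volume B).toReal - φ 0))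
    (hu : Measurable fun s => ‖u s‖) :
    ∫⁻ s in Icc 0 a, ENNReal.ofReal ‖u s‖ * W s ≤ eLorentzNorm φ a u := by
  rw [eLorentzNorm_eq_lintegral_distrib ha hmono hcont hu,
    lintegral_ofReal_mul_eq_lintegral_setLIntegral_lt _ (fun _ => norm_nonneg _) hu hW]
  refine lintegral_mono fun τ => ?_
  rw [Measure.restrict_restrict (measurableSet_lt measurable_const hu), inter_comm]
  exact hadm _ (measurableSet_superlevel hu a τ) (sep_subset _ _)

lemma eLorentzNorm_le_lintegral_norm_mul (ha : 0 ≤ a) (hmono : MonotoneOn φ (Icc 0 a))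
    (hcont : ContinuousOn φ (Icc 0 a)) {W : ℝ → ℝ≥0∞} (hW : Measurable W)
    (hu : Measurable fun s => ‖u s‖)
    (hatt : ∀ τ > 0, ENNReal.ofReal (φ (distrib a u τ).toReal - φ 0) ≤
      ∫⁻ s in {s ∈ Icc (0:ℝ) a | τ < ‖u s‖}, W s) :
    eLorentzNorm φ a u ≤ ∫⁻ s in Icc 0 a, ENNReal.ofReal ‖u s‖ * W s := by
  rw [eLorentzNorm_eq_lintegral_distrib ha hmono hcont hu,
    lintegral_ofReal_mul_eq_lintegral_setLIntegral_lt _ (fun _ => norm_nonneg _) hu hW]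
  refine setLIntegral_mono' measurableSet_Ioi fun τ hτ => ?_
  rw [Measure.restrict_restrict (measurableSet_lt measurable_const hu), inter_comm]
  exact hatt τ hτ

end LayerCake

section ConcaveRightDeriv

variable {S : Set ℝ} {φ : ℝ → ℝ} {x : ℝ}

lemma ConcaveOn.hasDerivWithinAt_rightDeriv_of_mem_interior (hφ : ConcaveOn ℝ S φ)
    (hx : x ∈ interior S) : HasDerivWithinAt φ (derivWithin φ (Ioi x) x) (Ioi x) x := by
  simpa using (hφ.neg.differentiableWithinAt_Ioi_of_mem_interior hx).neg.hasDerivWithinAt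

lemma ConcaveOn.antitoneOn_rightDeriv (hφ : ConcaveOn ℝ S φ) :
    AntitoneOn (fun x => derivWithin φ (Ioi x) x) (interior S) := fun x hx y hy hxy => by
  simpa [derivWithin.neg] using hφ.neg.monotoneOn_rightDeriv hx hy hxy

end ConcaveRightDeriv

def lorentzWeight (φ : ℝ → ℝ) (a : ℝ) : ℝ → ℝ :=
  (Ioo 0 a).indicator fun x => derivWithin φ (Ioi x) x

section LorentzWeight

variable {φ : ℝ → ℝ} {a b x : ℝ}

lemma measurable_lorentzWeight : Measurable (lorentzWeight φ a) :=
  (measurable_derivWithin_Ioi φ).indicator measurableSet_Ioo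

lemma lorentzWeight_of_mem (hx : x ∈ Ioo 0 a) :
    lorentzWeight φ a x = derivWithin φ (Ioi x) x :=
  indicator_of_mem hx _

lemma lorentzWeight_of_nonpos (hx : x ≤ 0) : lorentzWeight φ a x = 0 :=
  indicator_of_notMem (fun h => hx.not_gt h.1) _

lemma hasDerivWithinAt_lorentzWeight (hφ : ConcaveOn ℝ (Icc 0 a) φ) (hx : x ∈ Ioo 0 a) :
    HasDerivWithinAt φ (lorentzWeight φ a x) (Ioi x) x := by
  rw [lorentzWeight_of_mem hx]
  exact hφ.hasDerivWithinAt_rightDeriv_of_mem_interior (by rwa [interior_Icc])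

lemma slope_le_lorentzWeight (hφ : ConcaveOn ℝ (Icc 0 a) φ) (hx : x ∈ Ioo 0 a) :
    slope φ x a ≤ lorentzWeight φ a x :=
  hφ.slope_le_of_hasDerivWithinAt_Ioi (Ioo_subset_Icc_self hx) ⟨hx.1.le.trans hx.2.le, le_rfl⟩
    hx.2 (hasDerivWithinAt_lorentzWeight hφ hx)

lemma lorentzWeight_nonneg (hφ : ConcaveOn ℝ (Icc 0 a) φ) (hmono : MonotoneOn φ (Icc 0 a)) :
    0 ≤ lorentzWeight φ a x := by
  by_cases hx : x ∈ Ioo 0 a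
  · refine le_trans ?_ (slope_le_lorentzWeight hφ hx)
    rw [slope_def_field]
    exact div_nonneg (sub_nonneg.2 (hmono (Ioo_subset_Icc_self hx)
      ⟨hx.1.le.trans hx.2.le, le_rfl⟩ hx.2.le)) (sub_nonneg.2 hx.2.le)
  · rw [lorentzWeight, indicator_of_notMem hx]

lemma lorentzWeight_pos (hφ : ConcaveOn ℝ (Icc 0 a) φ) (hmono : StrictMonoOn φ (Icc 0 a))
    (hx : x ∈ Ioo 0 a) : 0 < lorentzWeight φ a x := by
  refine lt_of_lt_of_le ?_ (slope_le_lorentzWeight hφ hx)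
  rw [slope_def_field]
  exact div_pos (sub_pos.2 (hmono (Ioo_subset_Icc_self hx)
    ⟨hx.1.le.trans hx.2.le, le_rfl⟩ hx.2)) (sub_pos.2 hx.2)

lemma antitoneOn_lorentzWeight (hφ : ConcaveOn ℝ (Icc 0 a) φ) (hmono : MonotoneOn φ (Icc 0 a)) :
    AntitoneOn (lorentzWeight φ a) (Ioi 0) := by
  intro x hx y hy hxy
  by_cases hya : y ∈ Ioo 0 a
  · have hxa : x ∈ Ioo 0 a := ⟨hx, hxy.trans_lt hya.2⟩
    rw [lorentzWeight_of_mem hxa, lorentzWeight_of_mem hya]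
    exact hφ.antitoneOn_rightDeriv (by rwa [interior_Icc]) (by rwa [interior_Icc]) hxy
  · rw [lorentzWeight, indicator_of_notMem hya]
    exact lorentzWeight_nonneg hφ hmono

lemma setLIntegral_lorentzWeight (hφ : ConcaveOn ℝ (Icc 0 a) φ) (hmono : MonotoneOn φ (Icc 0 a))
    (hcont : ContinuousOn φ (Icc 0 a)) (hb : b ∈ Icc 0 a) :
    ∫⁻ x in Ioc 0 b, ENNReal.ofReal (lorentzWeight φ a x) = ENNReal.ofReal (φ b - φ 0) := by
  have hderiv : ∀ x ∈ Ioo 0 b, HasDerivWithinAt φ (lorentzWeight φ a x) (Ioi x) x :=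
    fun x hx => hasDerivWithinAt_lorentzWeight hφ ⟨hx.1, hx.2.trans_le hb.2⟩
  have hcont' : ContinuousOn φ (Icc 0 b) := hcont.mono (Icc_subset_Icc_right hb.2)
  have hint : IntegrableOn (lorentzWeight φ a) (Ioc 0 b) :=
    intervalIntegral.integrableOn_deriv_right_of_nonneg hcont' hderiv
      fun _ _ => lorentzWeight_nonneg hφ hmono
  rw [← ofReal_integral_eq_lintegral_ofReal hint
      (ae_of_all _ fun _ => lorentzWeight_nonneg hφ hmono),
    ← intervalIntegral.integral_of_le hb.1,
    intervalIntegral.integral_eq_sub_of_hasDeriv_right_of_le hb.1 hcont' hderiv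
      ((intervalIntegrable_iff_integrableOn_Ioc_of_le hb.1).2 hint)]

end LorentzWeight

section Bathtub

lemma volume_inter_Ioc_eq_min {I : Set ℝ} (hI : I ⊆ Ioi 0)
    (hI_lower : ∀ x ∈ Ioi (0:ℝ), ∀ y ∈ I, x ≤ y → x ∈ I) (b : ℝ) :
    volume (I ∩ Ioc 0 b) = min (volume I) (ENNReal.ofReal b) := by
  have hvol : volume (Ioc 0 b) = ENNReal.ofReal b := by rw [Real.volume_Ioc, sub_zero]
  by_cases hIb : I ⊆ Iic b
  · have hsub : I ⊆ Ioc 0 b := fun x hx => ⟨hI hx, hIb hx⟩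
    rw [inter_eq_left.2 hsub, min_eq_left (hvol ▸ measure_mono hsub)]
  · obtain ⟨y, hy, hby⟩ := not_subset.1 hIb
    have hsub : Ioc 0 b ⊆ I := fun x hx => hI_lower x hx.1 y hy (hx.2.trans (not_le.1 hby).le)
    rw [inter_eq_right.2 hsub, hvol, min_eq_right (hvol ▸ measure_mono hsub)]

lemma lintegral_le_setLIntegral_Ioc_of_antitoneOn {w : ℝ → ℝ} (hw : AntitoneOn w (Ioi 0))
    (hw_nonneg : 0 ≤ w) (hw_nonpos : ∀ x ≤ 0, w x = 0) (hwm : Measurable w) {ν : Measure ℝ}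
    (hν : ν ≤ volume) {b : ℝ} (hνb : ν univ ≤ ENNReal.ofReal b) :
    ∫⁻ x, ENNReal.ofReal (w x) ∂ν ≤ ∫⁻ x in Ioc 0 b, ENNReal.ofReal (w x) := by
  rw [lintegral_eq_lintegral_meas_lt _ (ae_of_all _ hw_nonneg) hwm.aemeasurable,
    lintegral_eq_lintegral_meas_lt _ (ae_of_all _ hw_nonneg) hwm.aemeasurable]
  refine setLIntegral_mono' measurableSet_Ioi fun σ hσ => ?_
  have hI : {x | σ < w x} ⊆ Ioi 0 := fun x hx =>
    lt_of_not_ge fun h0 => (lt_asymm (mem_Ioi.1 hσ)) (hw_nonpos x h0 ▸ hx)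
  have hI_lower : ∀ x ∈ Ioi (0:ℝ), ∀ y ∈ {x | σ < w x}, x ≤ y → x ∈ {x | σ < w x} :=
    fun x hx y hy hxy => lt_of_lt_of_le hy (hw hx (hI hy) hxy)
  rw [Measure.restrict_apply' measurableSet_Ioc, volume_inter_Ioc_eq_min hI hI_lower b]
  exact le_min (Measure.le_iff'.1 hν _) ((measure_mono (subset_univ _)).trans hνb)

end Bathtub

section CDF

variable {μ : Measure ℝ} [IsFiniteMeasure μ]

lemma measureReal_Iic_le_add (hμ : μ ≤ volume) {s s' : ℝ} (hss' : s ≤ s') :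
    μ.real (Iic s') ≤ μ.real (Iic s) + (s' - s) := by
  rw [← Iic_union_Ioc_eq_Iic hss', measureReal_union (Iic_disjoint_Ioc le_rfl) measurableSet_Ioc]
  gcongr
  calc μ.real (Ioc s s') ≤ volume.real (Ioc s s') :=
        ENNReal.toReal_mono measure_Ioc_lt_top.ne (Measure.le_iff'.1 hμ _)
    _ = s' - s := Real.volume_real_Ioc_of_le hss'

lemma continuous_measureReal_Iic (hμ : μ ≤ volume) : Continuous fun s => μ.real (Iic s) := by
  refine (LipschitzWith.of_le_add fun s s' => ?_).continuous
  rcases le_total s s' with h | h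
  · linarith [measureReal_mono (μ := μ) (Iic_subset_Iic.2 h), dist_nonneg (x := s) (y := s')]
  · rw [Real.dist_eq, abs_of_nonneg (sub_nonneg.2 h)]
    exact measureReal_Iic_le_add hμ h

lemma tendsto_measureReal_Iic_atBot : Tendsto (fun s => μ.real (Iic s)) atBot (𝓝 0) := by
  have hlim := tendsto_measure_iInter_atBot (μ := μ)
    (fun s => measurableSet_Iic.nullMeasurableSet) (fun _ _ => Iic_subset_Iic.2)
    ⟨0, measure_ne_top μ _⟩
  rw [iInter_eq_empty_iff.2 fun x => ⟨x - 1, by simp⟩, measure_empty] at hlim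
  have hlim' := (ENNReal.tendsto_toReal ENNReal.zero_ne_top).comp hlim
  rwa [ENNReal.toReal_zero] at hlim'

lemma measure_setOf_measureReal_Iic_le (hμ : μ ≤ volume) {y : ℝ} (hy : 0 ≤ y) :
    μ {s | μ.real (Iic s) ≤ y} = min (ENNReal.ofReal y) (μ univ) := by
  set F : ℝ → ℝ := fun s => μ.real (Iic s)
  change μ {s | F s ≤ y} = _
  have hF_mono : Monotone F := fun s s' h => measureReal_mono (Iic_subset_Iic.2 h)
  rcases le_or_gt (μ.real univ) y with hy_big | hy_small
  · have huniv : {s | F s ≤ y} = univ :=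
      eq_univ_of_forall fun s => (measureReal_mono (subset_univ (Iic s))).trans hy_big
    rw [huniv, ← ofReal_measureReal, min_eq_right (ENNReal.ofReal_le_ofReal hy_big)]
  rcases eq_empty_or_nonempty {s | F s ≤ y} with hempty | hne
  · have hy0 : y = 0 := le_antisymm (ge_of_tendsto' tendsto_measureReal_Iic_atBot fun s =>
      le_of_lt (not_le.1 fun h => hempty.subset h)) hy
    rw [hempty, hy0, measure_empty, ENNReal.ofReal_zero, zero_min]
  obtain ⟨s₀, hs₀⟩ := (((ENNReal.tendsto_toReal (measure_ne_top μ univ)).comp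
    (tendsto_measure_Iic_atTop μ)).eventually (lt_mem_nhds hy_small)).exists
  have hbdd : BddAbove {s | F s ≤ y} :=
    ⟨s₀, fun s hs => le_of_not_gt fun h => (hs.trans_lt hs₀).not_ge (hF_mono h.le)⟩
  set c := sSup {s | F s ≤ y}
  have hc : F c ≤ y :=
    (isClosed_le (continuous_measureReal_Iic hμ) continuous_const).csSup_mem hne hbdd
  have hFc : F c = y := by
    refine le_antisymm hc (le_of_not_gt fun h => ?_)
    have hmem : c + (y - F c) ∈ {s | F s ≤ y} := by
      have := measureReal_Iic_le_add hμ (le_add_of_nonneg_right (a := c) (sub_nonneg.2 hc))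
      simp only [mem_ofPred_eq, F] at this ⊢
      linarith
    linarith [le_csSup hbdd hmem]
  have hset : {s | F s ≤ y} = Iic c :=
    Subset.antisymm (fun s hs => le_csSup hbdd hs) fun s hs => (hF_mono hs).trans hc
  rw [hset, ← ofReal_measureReal, ← ofReal_measureReal (s := univ), ← hFc,
    min_eq_left (ENNReal.ofReal_le_ofReal (hFc.trans_le hy_small.le))]

end CDF

def normRank {E : Type*} [NormedAddCommGroup E] (a : ℝ) (u : ℝ → E) (s : ℝ) : ℝ :=
  volume.real {t ∈ Icc (0:ℝ) a | ‖u s‖ < ‖u t‖ ∨ (‖u t‖ = ‖u s‖ ∧ t ≤ s)}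

section NormRank

variable {E : Type*} [NormedAddCommGroup E] {a x τ s : ℝ} {u : ℝ → E}

lemma normRank_nonneg : 0 ≤ normRank a u s := measureReal_nonneg

lemma normRank_le (ha : 0 ≤ a) : normRank a u s ≤ a := by
  calc normRank a u s ≤ volume.real (Icc (0:ℝ) a) :=
        measureReal_mono (sep_subset _ _) measure_Icc_lt_top.ne
    _ = a := by rw [Real.volume_real_Icc_of_le ha, sub_zero]

lemma measurable_normRank (hu : Measurable fun s => ‖u s‖) : Measurable (normRank a u) := by
  have hS : MeasurableSet {p : ℝ × ℝ | p.2 ∈ Icc (0:ℝ) a ∧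
      (‖u p.1‖ < ‖u p.2‖ ∨ (‖u p.2‖ = ‖u p.1‖ ∧ p.2 ≤ p.1))} :=
    (measurable_snd measurableSet_Icc).inter
      ((measurableSet_lt (hu.comp measurable_fst) (hu.comp measurable_snd)).union
        ((measurableSet_eq_fun (hu.comp measurable_snd) (hu.comp measurable_fst)).inter
          (measurableSet_le measurable_snd measurable_fst)))
  exact (measurable_measure_prodMk_left hS).ennreal_toReal

lemma normRank_le_toReal_distrib (h : τ < ‖u s‖) : normRank a u s ≤ (distrib a u τ).toReal :=
  measureReal_mono (fun _ ht => ⟨ht.1, ht.2.elim h.trans fun h' => h'.1 ▸ h⟩) distrib_ne_top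

lemma toReal_distrib_le_normRank (h : ‖u s‖ ≤ τ) : (distrib a u τ).toReal ≤ normRank a u s :=
  measureReal_mono (fun _ ht => ⟨ht.1, Or.inl (h.trans_lt ht.2)⟩) (volume_sep_Icc_ne_top a _)

lemma normRank_eq_of_norm_eq (hu : Measurable fun s => ‖u s‖) (hs : ‖u s‖ = τ) :
    normRank a u s = (distrib a u τ).toReal +
      (volume.restrict {t ∈ Icc (0:ℝ) a | ‖u t‖ = τ}).real (Iic s) := by
  have hset : {t ∈ Icc (0:ℝ) a | ‖u s‖ < ‖u t‖ ∨ (‖u t‖ = ‖u s‖ ∧ t ≤ s)}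
      = {t ∈ Icc (0:ℝ) a | τ < ‖u t‖} ∪ Iic s ∩ {t ∈ Icc (0:ℝ) a | ‖u t‖ = τ} := by
    ext t
    simp only [mem_sep_iff, mem_union, mem_inter_iff, mem_Iic, hs]
    tauto
  rw [measureReal_restrict_apply measurableSet_Iic, normRank, hset,
    measureReal_union (disjoint_left.2 fun t h1 h2 => h1.2.ne' h2.2.2)
      (measurableSet_Iic.inter (measurableSet_level hu a τ)) (volume_sep_Icc_ne_top a _)
      ((measure_mono inter_subset_right).trans_lt (volume_sep_Icc_ne_top a _).lt_top).ne]
  rfl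

/-- Points with `|u| < u*(x)` have rank larger than `x`, and on the level set `|u| = u*(x)` the rank
is `m{|u| > u*(x)}` plus the distribution function of the level set. -/
lemma setOf_normRank_le_eq (hu : Measurable fun s => ‖u s‖) (hx : 0 < x) :
    {s ∈ Icc (0:ℝ) a | normRank a u s ≤ x}
      = {s ∈ Icc (0:ℝ) a | rearr a u x < ‖u s‖} ∪
        {s | (volume.restrict {t ∈ Icc (0:ℝ) a | ‖u t‖ = rearr a u x}).real (Iic s)
            ≤ x - (distrib a u (rearr a u x)).toReal} ∩
          {t ∈ Icc (0:ℝ) a | ‖u t‖ = rearr a u x} := by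
  have hd : (distrib a u (rearr a u x)).toReal ≤ x := ENNReal.toReal_le_of_le_ofReal hx.le
    ((rearr_le_iff hu hx (rearr_nonneg a u x)).1 le_rfl)
  ext s
  simp only [mem_union, mem_inter_iff, mem_ofPred_eq]
  constructor
  · rintro ⟨hs, hrank⟩
    rcases lt_trichotomy ‖u s‖ (rearr a u x) with hlt | heq | hgt
    · have hlt' := (ENNReal.ofReal_lt_iff_lt_toReal hx.le distrib_ne_top).1
        ((lt_rearr_iff hu hx (norm_nonneg _)).1 hlt)
      linarith [toReal_distrib_le_normRank (a := a) (le_refl ‖u s‖)]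
    · rw [normRank_eq_of_norm_eq hu heq] at hrank
      exact Or.inr ⟨by linarith, hs, heq⟩
    · exact Or.inl ⟨hs, hgt⟩
  · rintro (⟨hs, hτ⟩ | ⟨hG, hs, heq⟩)
    · exact ⟨hs, (normRank_le_toReal_distrib hτ).trans hd⟩
    · rw [normRank_eq_of_norm_eq hu heq]
      exact ⟨hs, by linarith⟩

lemma volume_normRank_le (hu : Measurable fun s => ‖u s‖) (hx : x ∈ Ioc 0 a) :
    volume {s ∈ Icc (0:ℝ) a | normRank a u s ≤ x} = ENNReal.ofReal x := by
  set τ := rearr a u x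
  set ν := volume.restrict {t ∈ Icc (0:ℝ) a | ‖u t‖ = τ}
  have : IsFiniteMeasure ν := isFiniteMeasure_restrict.2 (volume_sep_Icc_ne_top a _)
  have hd : (distrib a u τ).toReal ≤ x := ENNReal.toReal_le_of_le_ofReal hx.1.le
    ((rearr_le_iff hu hx.1 (rearr_nonneg a u x)).1 le_rfl)
  have hdx : distrib a u τ + ENNReal.ofReal (x - (distrib a u τ).toReal) = ENNReal.ofReal x := by
    have := ENNReal.ofReal_add (ENNReal.toReal_nonneg (a := distrib a u τ)) (sub_nonneg.2 hd)
    rwa [add_sub_cancel, ENNReal.ofReal_toReal distrib_ne_top, eq_comm] at this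
  have hG : MeasurableSet {s | ν.real (Iic s) ≤ x - (distrib a u τ).toReal} :=
    measurableSet_le (continuous_measureReal_Iic Measure.restrict_le_self).measurable
      measurable_const
  rw [setOf_normRank_le_eq hu hx.1,
    measure_union (disjoint_left.2 fun t h1 h2 => h1.2.ne' h2.2.2)
      (hG.inter (measurableSet_level hu a τ)),
    ← Measure.restrict_apply hG,
    measure_setOf_measureReal_Iic_le Measure.restrict_le_self (sub_nonneg.2 hd),
    Measure.restrict_apply_univ]
  change distrib a u τ + _ = _
  rw [← min_add_add_left, distrib_add_volume_level hu, hdx,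
    min_eq_left (ofReal_le_volume_rearr_le hu hx)]

lemma volume_normRank_nonpos (hu : Measurable fun s => ‖u s‖) (ha : 0 < a) :
    volume {s ∈ Icc (0:ℝ) a | normRank a u s ≤ 0} = 0 := by
  refine nonpos_iff_eq_zero.1 (ge_of_tendsto ((ENNReal.continuous_ofReal.tendsto' 0 0
    ENNReal.ofReal_zero).mono_left (nhdsWithin_le_nhds (s := Ioi 0))) ?_)
  filter_upwards [Ioc_mem_nhdsGT ha] with x hx
  rw [← volume_normRank_le hu hx]
  exact measure_mono fun s hs => ⟨hs.1, hs.2.trans hx.1.le⟩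

lemma map_normRank (hu : Measurable fun s => ‖u s‖) (ha : 0 < a) :
    (volume.restrict (Icc 0 a)).map (normRank a u) = volume.restrict (Icc 0 a) := by
  refine Measure.ext_of_Iic _ _ fun x => ?_
  rw [Measure.map_apply (measurable_normRank hu) measurableSet_Iic,
    Measure.restrict_apply (measurable_normRank hu measurableSet_Iic),
    Measure.restrict_apply measurableSet_Iic, inter_comm]
  change volume {s ∈ Icc (0:ℝ) a | normRank a u s ≤ x} = _
  rcases lt_or_ge x 0 with hx | hx
  · have hpre : {s ∈ Icc (0:ℝ) a | normRank a u s ≤ x} = ∅ :=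
      eq_empty_of_forall_notMem fun s hs => (hs.2.trans_lt hx).not_ge normRank_nonneg
    have hIic : Iic x ∩ Icc 0 a = ∅ :=
      eq_empty_of_forall_notMem fun s hs => (hs.1.trans_lt hx).not_ge hs.2.1
    rw [hpre, hIic]
  rcases hx.eq_or_lt with rfl | hx
  · rw [volume_normRank_nonpos hu ha, eq_comm]
    exact measure_mono_null (fun s hs => le_antisymm hs.1 hs.2.1) (measure_singleton 0)
  rcases le_or_gt x a with hxa | hxa
  · have hIic : Iic x ∩ Icc 0 a = Icc 0 x := by
      ext t
      simp only [mem_inter_iff, mem_Iic, mem_Icc]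
      exact ⟨fun h => ⟨h.2.1, h.1⟩, fun h => ⟨h.2, h.1, h.2.trans hxa⟩⟩
    rw [volume_normRank_le hu ⟨hx, hxa⟩, hIic, Real.volume_Icc, sub_zero]
  · have hpre : {s ∈ Icc (0:ℝ) a | normRank a u s ≤ x} = Icc 0 a :=
      sep_eq_self_iff_mem_true.2 fun s _ => (normRank_le ha.le).trans hxa.le
    rw [hpre, inter_eq_right.2 fun s hs => hs.2.trans hxa.le]

end NormRank

section RankWeight

variable {E : Type*} [NormedAddCommGroup E] {φ : ℝ → ℝ} {a : ℝ} {u : ℝ → E}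

lemma setLIntegral_lorentzWeight_normRank_le (ha : 0 < a) (hφ : ConcaveOn ℝ (Icc 0 a) φ)
    (hmono : MonotoneOn φ (Icc 0 a)) (hcont : ContinuousOn φ (Icc 0 a))
    (hu : Measurable fun s => ‖u s‖) {B : Set ℝ} (hBa : B ⊆ Icc 0 a) :
    ∫⁻ s in B, ENNReal.ofReal (lorentzWeight φ a (normRank a u s)) ≤
      ENNReal.ofReal (φ (volume B).toReal - φ 0) := by
  have hBa' : volume B ≤ ENNReal.ofReal a :=
    (measure_mono hBa).trans_eq (by rw [Real.volume_Icc, sub_zero])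
  have hb : (volume B).toReal ∈ Icc 0 a :=
    ⟨ENNReal.toReal_nonneg, ENNReal.toReal_le_of_le_ofReal ha.le hBa'⟩
  rw [← lintegral_map measurable_lorentzWeight.ennreal_ofReal (measurable_normRank hu),
    ← setLIntegral_lorentzWeight hφ hmono hcont hb]
  refine lintegral_le_setLIntegral_Ioc_of_antitoneOn (antitoneOn_lorentzWeight hφ hmono)
    (fun _ => lorentzWeight_nonneg hφ hmono) (fun _ hx => lorentzWeight_of_nonpos hx)
    measurable_lorentzWeight ?_ ?_
  · calc (volume.restrict B).map (normRank a u)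
        ≤ (volume.restrict (Icc 0 a)).map (normRank a u) :=
          Measure.map_mono (Measure.restrict_mono hBa le_rfl) (measurable_normRank hu)
      _ = volume.restrict (Icc 0 a) := map_normRank hu ha
      _ ≤ volume := Measure.restrict_le_self
  · rw [Measure.map_apply (measurable_normRank hu) MeasurableSet.univ, preimage_univ,
      Measure.restrict_apply_univ, ENNReal.ofReal_toReal (ne_top_of_le_ne_top
        ENNReal.ofReal_ne_top hBa')]

lemma le_setLIntegral_lorentzWeight_normRank (ha : 0 < a) (hφ : ConcaveOn ℝ (Icc 0 a) φ)
    (hmono : MonotoneOn φ (Icc 0 a)) (hcont : ContinuousOn φ (Icc 0 a))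
    (hu : Measurable fun s => ‖u s‖) (τ : ℝ) :
    ENNReal.ofReal (φ (distrib a u τ).toReal - φ 0) ≤
      ∫⁻ s in {s ∈ Icc (0:ℝ) a | τ < ‖u s‖},
        ENNReal.ofReal (lorentzWeight φ a (normRank a u s)) := by
  set D := (distrib a u τ).toReal
  have hD : D ∈ Icc 0 a := ⟨ENNReal.toReal_nonneg, toReal_distrib_le ha.le⟩
  have hrank : Measurable (normRank a u) := measurable_normRank hu
  have hIco : Iio D ∩ Icc 0 a = Ico 0 D := by
    ext t
    simp only [mem_inter_iff, mem_Iio, mem_Icc, mem_Ico]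
    exact ⟨fun h => ⟨h.2.1, h.1⟩, fun h => ⟨h.2, h.1, h.2.le.trans hD.2⟩⟩
  calc ENNReal.ofReal (φ D - φ 0) = ∫⁻ x in Ioc 0 D, ENNReal.ofReal (lorentzWeight φ a x) :=
        (setLIntegral_lorentzWeight hφ hmono hcont hD).symm
    _ = ∫⁻ x in Iio D, ENNReal.ofReal (lorentzWeight φ a x) ∂volume.restrict (Icc 0 a) := by
        rw [Measure.restrict_restrict measurableSet_Iio, hIco]
        exact setLIntegral_congr Ico_ae_eq_Ioc.symm
    _ = ∫⁻ s in normRank a u ⁻¹' Iio D, ENNReal.ofReal (lorentzWeight φ a (normRank a u s))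
          ∂volume.restrict (Icc 0 a) := by
        rw [← setLIntegral_map measurableSet_Iio measurable_lorentzWeight.ennreal_ofReal hrank,
          map_normRank hu ha]
    _ ≤ _ := by
        rw [Measure.restrict_restrict (hrank measurableSet_Iio)]
        exact lintegral_mono_set fun s hs =>
          ⟨hs.2, lt_of_not_ge fun h => (mem_Iio.1 hs.1).not_ge (toReal_distrib_le_normRank h)⟩

lemma ae_lorentzWeight_normRank_pos (ha : 0 < a) (hφ : ConcaveOn ℝ (Icc 0 a) φ)
    (hmono : StrictMonoOn φ (Icc 0 a)) (hu : Measurable fun s => ‖u s‖) :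
    ∀ᵐ s ∂volume.restrict (Icc 0 a), 0 < lorentzWeight φ a (normRank a u s) := by
  refine ae_of_ae_map (p := fun x => 0 < lorentzWeight φ a x)
    (measurable_normRank hu).aemeasurable ?_
  rw [map_normRank hu ha, ← Measure.restrict_congr_set Ioo_ae_eq_Icc]
  filter_upwards [ae_restrict_mem measurableSet_Ioo] with x hx using lorentzWeight_pos hφ hmono hx

end RankWeight

lemma exists_smul_of_norm_add_add_norm_sub_eq {V : Type*} [NormedAddCommGroup V]
    [NormedSpace ℝ V] [StrictConvexSpace ℝ V] {x y : V} (h : ‖x + y‖ + ‖x - y‖ = 2 * ‖x‖) :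
    ∃ c : ℝ, |c| ≤ 1 ∧ y = c • x := by
  have hdist : dist x (-y) + dist (-y) (-x) = dist x (-x) := by
    rw [dist_eq_norm, dist_eq_norm, dist_eq_norm, sub_neg_eq_add, neg_sub_neg, sub_neg_eq_add,
      ← two_smul ℝ x, norm_smul, Real.norm_two, h]
  obtain ⟨t, ⟨ht0, ht1⟩, hyt⟩ := dist_add_dist_eq_iff.1 hdist
  refine ⟨2 * t - 1, abs_le.2 ⟨by linarith, by linarith⟩, ?_⟩
  rw [AffineMap.lineMap_apply_module] at hyt
  rw [← neg_neg y, ← hyt]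
  module

lemma Complex.re_div_mul_eq_of_norm_add_add_norm_sub_eq {x y : ℂ} (hx : x ≠ 0)
    (h : ‖x + y‖ + ‖x - y‖ = 2 * ‖x‖) : |(y / x).re| ≤ 1 ∧ y = ((y / x).re : ℂ) * x := by
  obtain ⟨c, hc, rfl⟩ := exists_smul_of_norm_add_add_norm_sub_eq h
  rw [Complex.real_smul, mul_div_cancel_right₀ _ hx, Complex.ofReal_re]
  exact ⟨hc, rfl⟩

lemma ae_norm_add_add_norm_sub_eq {α : Type*} [MeasurableSpace α] {μ : Measure α}
    {V : Type*} [NormedAddCommGroup V] [NormedSpace ℝ V] {f g : α → V} {W : α → ℝ≥0∞}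
    (hW : Measurable W)
    (hW_pos : ∀ᵐ x ∂μ, W x ≠ 0) (hW_fin : ∀ᵐ x ∂μ, W x ≠ ∞) (hf : Measurable fun x => ‖f x‖)
    (hfg_add : Measurable fun x => ‖f x + g x‖) (hfg_sub : Measurable fun x => ‖f x - g x‖)
    {c : ℝ≥0∞} (hc : c ≠ ∞) (hfc : c ≤ ∫⁻ x, ENNReal.ofReal ‖f x‖ * W x ∂μ)
    (hadd : ∫⁻ x, ENNReal.ofReal ‖f x + g x‖ * W x ∂μ ≤ c)
    (hsub : ∫⁻ x, ENNReal.ofReal ‖f x - g x‖ * W x ∂μ ≤ c) :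
    ∀ᵐ x ∂μ, ‖f x + g x‖ + ‖f x - g x‖ = 2 * ‖f x‖ := by
  set P := fun x => ENNReal.ofReal (2 * ‖f x‖) * W x
  set Q := fun x => ENNReal.ofReal (‖f x + g x‖ + ‖f x - g x‖) * W x
  have hPQ : ∀ x, P x ≤ Q x := fun x => by
    simp only [P, Q]
    gcongr
    calc 2 * ‖f x‖ = ‖(f x + g x) + (f x - g x)‖ := by
          rw [add_add_sub_cancel, ← two_smul ℝ, norm_smul, Real.norm_two]
      _ ≤ _ := norm_add_le _ _
  have hQ : ∫⁻ x, Q x ∂μ ≤ 2 * c := by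
    simp only [Q, ENNReal.ofReal_add (norm_nonneg _) (norm_nonneg _), add_mul]
    rw [lintegral_add_left (f := fun x => ENNReal.ofReal ‖f x + g x‖ * W x)
      (hfg_add.ennreal_ofReal.mul hW), two_mul]
    exact add_le_add hadd hsub
  have hP : 2 * c ≤ ∫⁻ x, P x ∂μ := by
    simp only [P, ENNReal.ofReal_mul zero_le_two, ENNReal.ofReal_ofNat, mul_assoc]
    rw [lintegral_const_mul (f := fun x => ENNReal.ofReal ‖f x‖ * W x) _
      (hf.ennreal_ofReal.mul hW)]
    gcongr
  have hP_fin : ∫⁻ x, P x ∂μ ≠ ∞ :=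
    ((lintegral_mono hPQ).trans hQ).trans_lt (ENNReal.mul_lt_top (by simp) hc.lt_top) |>.ne
  filter_upwards [ae_eq_of_ae_le_of_lintegral_le (ae_of_all _ hPQ) hP_fin
    ((hfg_add.add hfg_sub).ennreal_ofReal.mul hW).aemeasurable (hQ.trans hP), hW_pos, hW_fin]
    with x hx hx0 hx_fin
  exact ((ENNReal.ofReal_eq_ofReal_iff (by positivity) (by positivity)).1
    ((ENNReal.mul_left_inj hx0 hx_fin).1 hx)).symm

theorem factor_through_real_multiplier_general (a : ℝ) (ha : 0 < a) (φ : ℝ → ℝ)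
    (hconc : ConcaveOn ℝ (Set.Icc 0 a) φ)
    (hcont : ContinuousOn φ (Set.Icc 0 a))
    (hmono : StrictMonoOn φ (Set.Icc 0 a))
    (f g : ℝ → ℂ) (hfm : Measurable f) (hgm : Measurable g)
    (hf1 : eLorentzNorm φ a f = 1)
    (hf0 : volume {t ∈ Set.Icc (0:ℝ) a | f t = 0} = 0)
    (hplus : eLorentzNorm φ a (f + g) ≤ 1)
    (hminus : eLorentzNorm φ a (f - g) ≤ 1) :
    ∃ h : ℝ → ℝ, Measurable h ∧
      (∀ᵐ t ∂(volume.restrict (Set.Icc (0:ℝ) a)), |h t| ≤ 1) ∧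
      (∀ᵐ t ∂(volume.restrict (Set.Icc (0:ℝ) a)), g t = (h t : ℂ) * f t) := by
  set W : ℝ → ℝ≥0∞ := fun s => ENNReal.ofReal (lorentzWeight φ a (normRank a f s))
  have hW : Measurable W :=
    (measurable_lorentzWeight.comp (measurable_normRank hfm.norm)).ennreal_ofReal
  have hnorming (u : ℝ → ℂ) (hu : Measurable u) :
      ∫⁻ s in Icc 0 a, ENNReal.ofReal ‖u s‖ * W s ≤ eLorentzNorm φ a u :=
    lintegral_norm_mul_le_eLorentzNorm ha.le hmono.monotoneOn hcont hW (fun _ _ hBa =>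
      setLIntegral_lorentzWeight_normRank_le ha hconc hmono.monotoneOn hcont hfm.norm hBa)
      hu.norm
  have hattained : eLorentzNorm φ a f ≤ ∫⁻ s in Icc 0 a, ENNReal.ofReal ‖f s‖ * W s :=
    eLorentzNorm_le_lintegral_norm_mul ha.le hmono.monotoneOn hcont hW hfm.norm fun τ _ =>
      le_setLIntegral_lorentzWeight_normRank ha hconc hmono.monotoneOn hcont hfm.norm τ
  have hW_pos : ∀ᵐ s ∂volume.restrict (Icc 0 a), W s ≠ 0 :=
    (ae_lorentzWeight_normRank_pos ha hconc hmono hfm.norm).mono fun _ hs =>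
      (ENNReal.ofReal_pos.2 hs).ne'
  have hsum := ae_norm_add_add_norm_sub_eq hW hW_pos (ae_of_all _ fun _ => ENNReal.ofReal_ne_top)
    hfm.norm (hfm.add hgm).norm (hfm.sub hgm).norm ENNReal.one_ne_top (hf1 ▸ hattained)
    ((hnorming _ (hfm.add hgm)).trans hplus) ((hnorming _ (hfm.sub hgm)).trans hminus)
  have hf_ne : ∀ᵐ t ∂volume.restrict (Icc 0 a), f t ≠ 0 := by
    rw [ae_restrict_iff' measurableSet_Icc, ae_iff]
    simpa only [Classical.not_imp, not_not] using hf0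
  have hfactor : ∀ᵐ t ∂volume.restrict (Icc 0 a),
      |(g t / f t).re| ≤ 1 ∧ g t = ((g t / f t).re : ℂ) * f t := by
    filter_upwards [hsum, hf_ne] with t ht hft
    exact Complex.re_div_mul_eq_of_norm_add_add_norm_sub_eq hft ht
  exact ⟨fun t => (g t / f t).re, by fun_prop, hfactor.mono fun _ h => h.1,
    hfactor.mono fun _ h => h.2⟩

/-- Let `φ` be strictly increasing, concave, continuous on `[0,a]` with
`φ 0 = 0`, `φ a = 1`.  If `f, g ∈ Λ(φ)[0,a]`, `‖f‖ = 1`, `f ≠ 0` a.e., and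
`‖f ± g‖ ≤ 1`, then `g = h·f` for some real-valued `h` with `|h| ≤ 1` a.e. -/
theorem factor_through_real_multiplier (a : ℝ) (ha : 0 < a) (φ : ℝ → ℝ)
    (hconc : ConcaveOn ℝ (Set.Icc 0 a) φ)
    (hcont : ContinuousOn φ (Set.Icc 0 a))
    (hmono : StrictMonoOn φ (Set.Icc 0 a))
    (hφ0 : φ 0 = 0) (hφa : φ a = 1)
    (f g : ℝ → ℂ) (hfm : Measurable f) (hgm : Measurable g)
    (hgmem : eLorentzNorm φ a g < ⊤)
    (hf1 : eLorentzNorm φ a f = 1)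
    (hf0 : volume {t ∈ Set.Icc (0:ℝ) a | f t = 0} = 0)
    (hplus : eLorentzNorm φ a (f + g) ≤ 1)
    (hminus : eLorentzNorm φ a (f - g) ≤ 1) :
    ∃ h : ℝ → ℝ, Measurable h ∧
      (∀ᵐ t ∂(volume.restrict (Set.Icc (0:ℝ) a)), |h t| ≤ 1) ∧
      (∀ᵐ t ∂(volume.restrict (Set.Icc (0:ℝ) a)), g t = (h t : ℂ) * f t) :=
  factor_through_real_multiplier_general a ha φ hconc hcont hmono f g hfm hgm hf1 hf0 hplus hminus

end
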